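/- arXiv:2310.14927 — 2 statements merged into one kernel-verified Lean document; each statement's English description precedes it below -/
import Mathlib

section
/- Let b : ℕ → ℝ and m : ℕ → ℝ define a birth-death chain (b r > 0, m r > 0 for all r), let α > 0 and let u : ℕ → ℝ be α-harmonic, not identically zero, and such that the family (|u r|·m r)_{r∈ℕ} is summable (i.e. u ∈ ℓ¹(ℕ,m)). Then m is summable and the family r ↦ (∑_{k>r} m k)/(b r) is summable. -/
/-!
Summing the harmonic equation gives the flux identity
`b r (u (r+1) - u r) = α ∑_{k ≤ r} m k u k`. Hence a nonzero solution has `u 0 ≠ 0`, and after a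
sign change it is positive and strictly increasing, with flux at least `D = α m 0 u 0`.
Then `m ≤ m u / u 0` is summable, and `T r / b r ≤ (u (r+1) - u r) T r / D` for the tails
`T r = ∑_{k > r} m k`; the right-hand side is summable by summation by parts, since
`∑_{r < N} (u (r+1) - u r) T r = ∑_{1 ≤ k ≤ N} m k u k + u N T N - u 0 T 0` and
`u N T N ≤ ∑_{k > N} m k u k`.
-/

/-- A birth-death chain over `ℕ` with edge weights `b` (edge between `r` and `r+1`)
and measure `m`: a function `u` is `α`-harmonic if `(Δ + α) u = 0` where
`Δu(0) = (1/m 0) · b 0 · (u 0 − u 1)` and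
`Δu(r) = (1/m r) · (b (r−1) · (u r − u (r−1)) + b r · (u r − u (r+1)))` for `r ≥ 1`. -/
def IsAlphaHarmonicBD (b m : ℕ → ℝ) (α : ℝ) (u : ℕ → ℝ) : Prop :=
  (1 / m 0) * (b 0 * (u 0 - u 1)) + α * u 0 = 0 ∧
  ∀ r : ℕ, 1 ≤ r →
    (1 / m r) * (b (r - 1) * (u r - u (r - 1)) + b r * (u r - u (r + 1))) + α * u r = 0

open Finset

theorem div_le_mul_div_of_le_mul {t b d D : ℝ} (ht : 0 ≤ t) (hb : 0 < b) (hD : 0 < D)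
    (h : D ≤ b * d) : t / b ≤ d * t / D := by
  rw [div_le_div_iff₀ hb hD]
  nlinarith

section Tail

variable {m u : ℕ → ℝ}

theorem Summable.comp_add_left (hm : Summable m) (n : ℕ) : Summable fun k => m (n + k) :=
  hm.comp_injective (add_right_injective n)

theorem tsum_tail_eq_add (hm : Summable m) (r : ℕ) :
    ∑' k, m (r + 1 + k) = m (r + 1) + ∑' k, m (r + 1 + 1 + k) := by
  rw [(hm.comp_add_left (r + 1)).tsum_eq_zero_add]
  congr 1
  exact tsum_congr fun k => congrArg m (by omega)

theorem mul_tsum_tail_le (hu : Monotone u) (hu0 : 0 ≤ u 0) (hm : ∀ k, 0 ≤ m k)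
    (hm_sum : Summable m) (hmu : Summable fun k => m k * u k) (r : ℕ) :
    u r * ∑' k, m (r + 1 + k) ≤ ∑' k, m k * u k := by
  have hmu_nonneg k : 0 ≤ m k * u k := mul_nonneg (hm k) (hu0.trans (hu (Nat.zero_le k)))
  calc u r * ∑' k, m (r + 1 + k)
      = ∑' k, u r * m (r + 1 + k) := tsum_mul_left.symm
    _ ≤ ∑' k, m (r + 1 + k) * u (r + 1 + k) := by
        refine Summable.tsum_le_tsum (fun k => ?_)
          ((hm_sum.comp_add_left (r + 1)).mul_left (u r)) (hmu.comp_add_left (r + 1))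
        rw [mul_comm]
        exact mul_le_mul_of_nonneg_left (hu (by omega)) (hm _)
    _ ≤ ∑' k, m k * u k :=
        tsum_comp_le_tsum_of_inj hmu hmu_nonneg (add_right_injective (r + 1))

theorem summable_sub_mul_tsum_tail (hu : Monotone u) (hu0 : 0 ≤ u 0) (hm : ∀ k, 0 ≤ m k)
    (hm_sum : Summable m) (hmu : Summable fun k => m k * u k) :
    Summable fun r => (u (r + 1) - u r) * ∑' k, m (r + 1 + k) := by
  set T : ℕ → ℝ := fun r => ∑' k, m (r + 1 + k)
  set S : ℝ := ∑' k, m k * u k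
  have hT_nonneg r : 0 ≤ T r := tsum_nonneg fun k => hm _
  have hmu_nonneg k : 0 ≤ m k * u k := mul_nonneg (hm k) (hu0.trans (hu (Nat.zero_le k)))
  have htelescope r : (u (r + 1) - u r) * T r
      = (u (r + 1) * T (r + 1) - u r * T r) + m (r + 1) * u (r + 1) := by
    simp only [T, tsum_tail_eq_add hm_sum r]
    ring
  have hpartial N : ∑ r ∈ range N, m (r + 1) * u (r + 1) ≤ S := by
    have := (hmu.comp_injective (add_left_injective 1)).sum_le_tsum (range N)
      (fun k _ => hmu_nonneg (k + 1))
    exact this.trans (tsum_comp_le_tsum_of_inj hmu hmu_nonneg (add_left_injective 1))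
  refine summable_of_sum_range_le (c := S + S)
    (fun r => mul_nonneg (sub_nonneg.2 (hu (Nat.le_succ r))) (hT_nonneg r)) fun N => ?_
  calc ∑ r ∈ range N, (u (r + 1) - u r) * T r
      = (u N * T N - u 0 * T 0) + ∑ r ∈ range N, m (r + 1) * u (r + 1) := by
        simp only [htelescope, sum_add_distrib, sum_range_sub (fun r => u r * T r)]
    _ ≤ S + S := by
        have := mul_tsum_tail_le hu hu0 hm hm_sum hmu N
        linarith [hpartial N, mul_nonneg hu0 (hT_nonneg 0)]

end Tail

namespace IsAlphaHarmonicBD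

variable {b m : ℕ → ℝ} {α : ℝ} {u : ℕ → ℝ}

theorem flux_eq (hm : ∀ r, m r ≠ 0) (hu : IsAlphaHarmonicBD b m α u) (r : ℕ) :
    b r * (u (r + 1) - u r) = α * ∑ k ∈ range (r + 1), m k * u k := by
  induction r with
  | zero =>
    have h := hu.1
    field_simp [hm 0] at h
    simp only [zero_add, sum_range_one]
    linarith
  | succ r ih =>
    have h := hu.2 (r + 1) (Nat.le_add_left 1 r)
    simp only [Nat.add_sub_cancel] at h
    field_simp [hm (r + 1)] at h
    rw [sum_range_succ, mul_add, ← ih]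
    linarith

theorem neg (hu : IsAlphaHarmonicBD b m α u) : IsAlphaHarmonicBD b m α (-u) := by
  refine ⟨?_, fun r hr => ?_⟩
  · simp only [Pi.neg_apply]
    linear_combination -hu.1
  · simp only [Pi.neg_apply]
    linear_combination -hu.2 r hr

theorem eq_zero_of_apply_zero (hb : ∀ r, b r ≠ 0) (hm : ∀ r, m r ≠ 0)
    (hu : IsAlphaHarmonicBD b m α u) (h0 : u 0 = 0) : u = 0 := by
  funext r
  rw [Pi.zero_apply]
  induction r using Nat.strong_induction_on with
  | _ r ih =>
    rcases r with _ | r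
    · exact h0
    have hsum : ∑ k ∈ range (r + 1), m k * u k = 0 :=
      sum_eq_zero fun k hk => by rw [ih k (by simp at hk; omega), mul_zero]
    have h := hu.flux_eq hm r
    rw [hsum, mul_zero, ih r (Nat.lt_succ_self r), sub_zero] at h
    exact (mul_eq_zero.1 h).resolve_left (hb r)

theorem pos_of_apply_zero_pos (hb : ∀ r, 0 < b r) (hm : ∀ r, 0 < m r) (hα : 0 < α)
    (hu : IsAlphaHarmonicBD b m α u) (h0 : 0 < u 0) (r : ℕ) : 0 < u r := by
  induction r using Nat.strong_induction_on with
  | _ r ih =>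
    rcases r with _ | r
    · exact h0
    have hsum : 0 < ∑ k ∈ range (r + 1), m k * u k :=
      sum_pos (fun k hk => mul_pos (hm k) (ih k (by simp at hk; omega))) nonempty_range_add_one
    have hflux := hu.flux_eq (fun k => (hm k).ne') r
    have hstep : 0 < u (r + 1) - u r :=
      pos_of_mul_pos_right (hflux ▸ mul_pos hα hsum) (hb r).le
    linarith [ih r (Nat.lt_succ_self r)]

theorem flux_ge (hm : ∀ r, 0 < m r) (hα : 0 ≤ α) (hu : IsAlphaHarmonicBD b m α u)
    (hpos : ∀ r, 0 < u r) (r : ℕ) : α * (m 0 * u 0) ≤ b r * (u (r + 1) - u r) := by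
  rw [hu.flux_eq (fun k => (hm k).ne') r]
  exact mul_le_mul_of_nonneg_left (single_le_sum (f := fun k => m k * u k)
    (fun k _ => (mul_pos (hm k) (hpos k)).le) (mem_range.2 r.succ_pos)) hα

theorem strictMono (hb : ∀ r, 0 < b r) (hm : ∀ r, 0 < m r) (hα : 0 < α)
    (hu : IsAlphaHarmonicBD b m α u) (h0 : 0 < u 0) : StrictMono u := by
  refine strictMono_nat_of_lt_succ fun r => sub_pos.1 (pos_of_mul_pos_right ?_ (hb r).le)
  exact (mul_pos hα (mul_pos (hm 0) h0)).trans_le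
    (hu.flux_ge hm hα.le (hu.pos_of_apply_zero_pos hb hm hα h0) r)

end IsAlphaHarmonicBD

theorem bd_harmonic_ell1_nontrivial (b m : ℕ → ℝ) (hb : ∀ r, 0 < b r) (hm : ∀ r, 0 < m r)
    (α : ℝ) (hα : 0 < α) (u : ℕ → ℝ) (hu : IsAlphaHarmonicBD b m α u)
    (hne : u ≠ 0) (hsum : Summable (fun r : ℕ => |u r| * m r)) :
    Summable m ∧ Summable (fun r : ℕ => (∑' k : ℕ, m (r + 1 + k)) / b r) := by
  have hu0 : u 0 ≠ 0 :=
    fun h => hne (hu.eq_zero_of_apply_zero (fun r => (hb r).ne') (fun r => (hm r).ne') h)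
  wlog h0 : 0 < u 0 generalizing u
  · exact this (-u) hu.neg (neg_ne_zero.2 hne) (by simpa using hsum) (by simpa using hu0)
      (by simpa using hu0.lt_or_gt.resolve_right h0)
  have hpos := hu.pos_of_apply_zero_pos hb hm hα h0
  have hmono := (hu.strictMono hb hm hα h0).monotone
  have hmu : Summable fun r => m r * u r :=
    hsum.congr fun r => by rw [abs_of_pos (hpos r), mul_comm]
  have hm_sum : Summable m := (hmu.div_const (u 0)).of_nonneg_of_le (fun r => (hm r).le)
    fun r => by rw [le_div_iff₀ h0]; exact mul_le_mul_of_nonneg_left (hmono r.zero_le) (hm r).le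
  refine ⟨hm_sum, ?_⟩
  have hT r : 0 ≤ ∑' k, m (r + 1 + k) := tsum_nonneg fun k => (hm _).le
  exact ((summable_sub_mul_tsum_tail hmono h0.le (fun k => (hm k).le) hm_sum hmu).div_const
    (α * (m 0 * u 0))).of_nonneg_of_le (fun r => div_nonneg (hT r) (hb r).le) fun r =>
      div_le_mul_div_of_le_mul (hT r) (hb r) (mul_pos hα (mul_pos (hm 0) h0))
        (hu.flux_ge hm hα.le hpos r)
end

section
/- Let n be a finite type and A : Matrix n n ℝ a matrix whose off-diagonal entries are nonpositive (A i j ≤ 0 for i ≠ j). Then for every t ≥ 0 and every index x ∈ n, the diagonal entry satisfies (exp(−t·A)) x x ≥ Real.exp(−t·(A x x)). -/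
open NormedSpace

/-!
For an entrywise nonnegative matrix `M`, every term of the exponential series dominates the
corresponding scalar term: `(M ^ k) x x ≥ (M x x) ^ k`, keeping only the path that stays at `x`.
Hence `(exp M) x x ≥ exp (M x x)`. A matrix with nonnegative off-diagonal entries becomes
entrywise nonnegative after adding a large multiple `c • 1`, which multiplies `exp M` by
`exp c` and shifts the diagonal by `c`, so the inequality persists. Apply this to `M = -t • A`.
-/

namespace Matrix

variable {n : Type*} [Fintype n] [DecidableEq n] {M : Matrix n n ℝ}

theorem apply_self_pow_le_pow_apply_self {α : Type*} [Semiring α] [PartialOrder α]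
    [IsOrderedRing α] {M : Matrix n n α} (hM : ∀ i j, 0 ≤ M i j) (k : ℕ) (x : n) :
    M x x ^ k ≤ (M ^ k) x x := by
  induction k with
  | zero => simp
  | succ k ih =>
    calc M x x ^ (k + 1) = M x x ^ k * M x x := pow_succ _ _
      _ ≤ (M ^ k) x x * M x x := mul_le_mul_of_nonneg_right ih (hM x x)
      _ ≤ ∑ l, (M ^ k) x l * M l x :=
        Finset.single_le_sum (f := fun l => (M ^ k) x l * M l x)
          (fun l _ => mul_nonneg (pow_apply_nonneg hM k x l) (hM l x)) (Finset.mem_univ x)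
      _ = (M ^ (k + 1)) x x := by rw [pow_succ, mul_apply]

theorem real_exp_apply_self_le_exp_apply_self_of_nonneg (hM : ∀ i j, 0 ≤ M i j) (x : n) :
    Real.exp (M x x) ≤ exp M x x := by
  have hreal : HasSum (fun k : ℕ => (k.factorial⁻¹ : ℝ) • M x x ^ k) (Real.exp (M x x)) := by
    rw [Real.exp_eq_exp_ℝ]
    exact exp_series_hasSum_exp' (M x x)
  have hmat : HasSum (fun k : ℕ => ((k.factorial⁻¹ : ℝ) • M ^ k) x x) (exp M x x) := by
    open scoped Norms.Operator in
    exact Pi.hasSum.mp (Pi.hasSum.mp (exp_series_hasSum_exp' (𝕂 := ℝ) M) x) x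
  refine hasSum_le (fun k => ?_) hreal hmat
  rw [smul_apply, smul_eq_mul, smul_eq_mul]
  exact mul_le_mul_of_nonneg_left (apply_self_pow_le_pow_apply_self hM k x) (by positivity)

theorem exp_add_smul_one (M : Matrix n n ℝ) (c : ℝ) :
    exp (M + c • (1 : Matrix n n ℝ)) = Real.exp c • exp M := by
  rw [Matrix.exp_add_of_commute _ _ ((Commute.one_right M).smul_right c),
    smul_one_eq_diagonal, exp_diagonal, Pi.exp_def, ← Real.exp_eq_exp_ℝ,
    ← smul_one_eq_diagonal, mul_smul_one]

theorem real_exp_apply_self_le_exp_apply_self (hM : ∀ i j, i ≠ j → 0 ≤ M i j) (x : n) :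
    Real.exp (M x x) ≤ exp M x x := by
  set c := ∑ i, |M i i|
  have hshift : ∀ i j, 0 ≤ (M + c • (1 : Matrix n n ℝ)) i j := by
    intro i j
    rcases eq_or_ne i j with rfl | hij
    · have : |M i i| ≤ c := Finset.single_le_sum (f := fun i => |M i i|)
        (fun _ _ => abs_nonneg _) (Finset.mem_univ i)
      simp only [add_apply, smul_apply, one_apply_eq, smul_eq_mul, mul_one]
      linarith [neg_abs_le (M i i)]
    · simpa [one_apply_ne hij] using hM i j hij
  have key := real_exp_apply_self_le_exp_apply_self_of_nonneg hshift x
  rw [exp_add_smul_one, smul_apply, smul_eq_mul, add_apply, smul_apply, one_apply_eq,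
    smul_eq_mul, mul_one, Real.exp_add, mul_comm] at key
  exact le_of_mul_le_mul_left key (Real.exp_pos c)

end Matrix

/-- Minimum-principle estimate for the heat semigroup of a finite graph:
`(exp (−t • A)) x x ≥ exp (−t · A x x)` when the off-diagonal entries of `A`
are nonpositive. -/
theorem matrix_exp_diag_lower_bound {n : Type*} [Fintype n] [DecidableEq n]
    (A : Matrix n n ℝ) (hA : ∀ i j, i ≠ j → A i j ≤ 0) :
    ∀ t : ℝ, 0 ≤ t → ∀ x : n, Real.exp (-t * A x x) ≤ NormedSpace.exp (-t • A) x x := by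
  intro t ht x
  exact Matrix.real_exp_apply_self_le_exp_apply_self
    (fun i j hij => mul_nonneg_of_nonpos_of_nonpos (neg_nonpos.mpr ht) (hA i j hij)) x
end
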